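/- Let a, c be real numbers with c > a > 0, let 0 < ρ ≤ 1, and let (m_k), (n_k) be sequences of positive integers with m_k ≥ n_k - 1 for all k, m_k → ∞, and n_k/m_k → ρ. Define S_{mn} = n! (a)_{m+1} (c-a)_n / ((c)_{m+n} (c+m)_{n+1}) and R_{mn}(z) = S_{mn} · z^{m+n+1} · ₂F₁(a+m+1, n+1; c+m+n+1; z). Then R_{m_k n_k}(z) → 0 as k → ∞, uniformly in z on every compact subset of the open unit disc |z| < 1. -/
import Mathlib


/-- The Pochhammer symbol `(x)_k = x (x+1) ⋯ (x+k-1)` for a real number `x`. -/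
noncomputable def poch (x : ℝ) (k : ℕ) : ℝ := ∏ i ∈ Finset.range k, (x + i)

/-- The Gauss hypergeometric series `₂F₁(a, b; c; z)` with real parameters, for a
complex argument `z` (convergent for `|z| < 1`). -/
noncomputable def hyp2F1 (a b c : ℝ) (z : ℂ) : ℂ :=
  ∑' k : ℕ, (((poch a k * poch b k) / (poch c k * (Nat.factorial k)) : ℝ) : ℂ) * z ^ k

/-- The constant `S_{mn} = n! (a)_{m+1} (c-a)_n / ((c)_{m+n} (c+m)_{n+1})`. -/
noncomputable def padeS (m n : ℕ) (a c : ℝ) : ℝ :=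
  (Nat.factorial n) * poch a (m + 1) * poch (c - a) n /
    (poch c (m + n) * poch (c + m) (n + 1))

/-- The Padé remainder `R_{mn}(z) = S_{mn} z^{m+n+1} ₂F₁(a+m+1, n+1; c+m+n+1; z)`. -/
noncomputable def padeR (m n : ℕ) (a c : ℝ) (z : ℂ) : ℂ :=
  ((padeS m n a c : ℝ) : ℂ) * z ^ (m + n + 1) *
    hyp2F1 (a + m + 1) ((n : ℝ) + 1) (c + m + n + 1) z

lemma poch_pos {x : ℝ} (hx : 0 < x) (k : ℕ) : 0 < poch x k :=
  Finset.prod_pos fun i _ => by positivity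

lemma poch_le_poch {x y : ℝ} (hx : 0 < x) (hxy : x ≤ y) (k : ℕ) :
    poch x k ≤ poch y k :=
  Finset.prod_le_prod (fun i _ => by positivity) (fun i _ => by simp; linarith)

lemma poch_add (x : ℝ) (j k : ℕ) :
    poch x (j + k) = poch x j * poch (x + j) k := by
  rw [poch, poch, poch, Finset.prod_range_add]
  congr 1
  exact Finset.prod_congr rfl fun i _ => by push_cast; ring

lemma poch_one_eq_factorial (n : ℕ) : poch 1 n = n.factorial := by
  induction n with
  | zero => simp [poch]
  | succ k ih => rw [poch, Finset.prod_range_succ, ← poch, ih]; push_cast [Nat.factorial_succ]; ring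

lemma poch_add' (x y : ℝ) (j k : ℕ) (h : y = x + j) :
    poch x j * poch y k = poch x (j + k) := by subst h; rw [poch_add]

lemma key_ineq (a c : ℝ) (ha : 0 < a) (hca : a < c) (m n k : ℕ) :
    poch 1 n * poch a (m+1) * poch (c-a) n * (poch (a+(m:ℝ)+1) k * poch ((n:ℝ)+1) k)
      ≤ poch c (m+n) * poch (c+(m:ℝ)) (n+1) * (poch (c+(m:ℝ)+(n:ℝ)+1) k * poch 1 k) := by
  have hc : (0:ℝ) < c := ha.trans hca
  have n1 : poch a (m+1) * poch (a+(m:ℝ)+1) k = poch a (m+1+k) :=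
    poch_add' a _ (m+1) k (by push_cast; ring)
  have n2 : poch 1 n * poch ((n:ℝ)+1) k = poch 1 (n+k) :=
    poch_add' 1 _ n k (by push_cast; ring)
  have n3 : poch 1 (n+k) = poch 1 k * poch ((k:ℝ)+1) n := by
    rw [Nat.add_comm]; exact (poch_add' 1 _ k n (by push_cast; ring)).symm
  have d1 : poch (c+(m:ℝ)) (n+1) = poch (c+(m:ℝ)) n * poch (c+(m:ℝ)+(n:ℝ)) 1 :=
    (poch_add' _ _ n 1 (by push_cast; ring)).symm
  have d2 : poch c (m+n) * poch (c+(m:ℝ)+(n:ℝ)) 1 = poch c (m+n+1) :=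
    poch_add' c _ (m+n) 1 (by push_cast; ring)
  have d3 : poch c (m+n+1) * poch (c+(m:ℝ)+(n:ℝ)+1) k = poch c (m+n+1+k) :=
    poch_add' c _ (m+n+1) k (by push_cast; ring)
  have d4 : poch c (m+n+1+k) = poch c (m+1+k) * poch (c+(m:ℝ)+1+(k:ℝ)) n := by
    have := poch_add' c (c+(m:ℝ)+1+(k:ℝ)) (m+1+k) n (by push_cast; ring)
    rw [show m+n+1+k = m+1+k+n from by omega]; exact this.symm
  calc poch 1 n * poch a (m+1) * poch (c-a) n * (poch (a+(m:ℝ)+1) k * poch ((n:ℝ)+1) k)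
      = (poch 1 n * poch ((n:ℝ)+1) k) * ((poch a (m+1) * poch (a+(m:ℝ)+1) k) * poch (c-a) n) := by
        ring
    _ = poch 1 k * (poch ((k:ℝ)+1) n * (poch (c-a) n * poch a (m+1+k))) := by
        rw [n2, n3, n1]; ring
    _ ≤ poch 1 k * (poch (c+(m:ℝ)+1+(k:ℝ)) n * (poch (c+(m:ℝ)) n * poch c (m+1+k))) := by
        apply mul_le_mul_of_nonneg_left _ (poch_pos one_pos k).le
        apply mul_le_mul
        · exact poch_le_poch (by positivity) (by linarith) n
        · apply mul_le_mul
          · exact poch_le_poch (by linarith) (by linarith) n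
          · exact poch_le_poch ha hca.le (m+1+k)
          · exact (poch_pos ha _).le
          · exact (poch_pos (by linarith) _).le
        · exact (mul_pos (poch_pos (by linarith) n) (poch_pos ha _)).le
        · exact (poch_pos (by positivity) n).le
    _ = poch c (m+n) * poch (c+(m:ℝ)) (n+1) * (poch (c+(m:ℝ)+(n:ℝ)+1) k * poch 1 k) := by
        linear_combination (-(poch c (m+n) * poch (c+(m:ℝ)+(n:ℝ)+1) k * poch 1 k)) * d1
          - (poch (c+(m:ℝ)) n * poch (c+(m:ℝ)+(n:ℝ)+1) k * poch 1 k) * d2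
          - (poch (c+(m:ℝ)) n * poch 1 k) * d3 - (poch (c+(m:ℝ)) n * poch 1 k) * d4

lemma padeR_norm_le (a c : ℝ) (ha : 0 < a) (hca : a < c) (m n : ℕ) {r : ℝ}
    (hr0 : 0 ≤ r) (hr1 : r < 1) {z : ℂ} (hz : ‖z‖ ≤ r) :
    ‖padeR m n a c z‖ ≤ r ^ (m + n + 1) / (1 - r) := by
  have hc : (0:ℝ) < c := ha.trans hca
  have hm0 : (0:ℝ) ≤ m := Nat.cast_nonneg m
  have hn0 : (0:ℝ) ≤ n := Nat.cast_nonneg n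
  set S := padeS m n a c with hSdef
  have hS : 0 < S := by
    rw [hSdef, padeS]
    apply div_pos
    · exact mul_pos (mul_pos (by positivity) (poch_pos ha _)) (poch_pos (by linarith) _)
    · exact mul_pos (poch_pos hc _) (poch_pos (by linarith) _)
  set T : ℕ → ℝ := fun k =>
    (poch (a+(m:ℝ)+1) k * poch ((n:ℝ)+1) k) / (poch (c+(m:ℝ)+(n:ℝ)+1) k * (Nat.factorial k : ℝ))
    with hTdef
  have hT0 : ∀ k, 0 ≤ T k := fun k => by
    apply div_nonneg
    · exact (mul_pos (poch_pos (by linarith) k) (poch_pos (by linarith) k)).le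
    · exact (mul_pos (poch_pos (by linarith) k) (by positivity)).le
  have hST : ∀ k, S * T k ≤ 1 := by
    intro k
    rw [hSdef, padeS, hTdef, div_mul_div_comm, div_le_one
      (mul_pos (mul_pos (poch_pos hc _) (poch_pos (by linarith) _))
        (mul_pos (poch_pos (by linarith) k) (by positivity)))]
    rw [← poch_one_eq_factorial n, ← poch_one_eq_factorial k]
    exact key_ineq a c ha hca m n k
  have hTle : ∀ k, T k ≤ S⁻¹ := by
    intro k
    calc T k = S⁻¹ * (S * T k) := by field_simp
      _ ≤ S⁻¹ * 1 := mul_le_mul_of_nonneg_left (hST k) (inv_nonneg.mpr hS.le)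
      _ = S⁻¹ := mul_one _
  set f : ℕ → ℂ := fun k => ((T k : ℝ) : ℂ) * z ^ k with hfdef
  have hnorm_le : ∀ k, ‖f k‖ ≤ S⁻¹ * r ^ k := by
    intro k
    rw [hfdef, norm_mul, norm_pow, Complex.norm_real, Real.norm_eq_abs, abs_of_nonneg (hT0 k)]
    exact mul_le_mul (hTle k) (pow_le_pow_left₀ (norm_nonneg z) hz k)
      (pow_nonneg (norm_nonneg z) k) (inv_nonneg.mpr hS.le)
  have hgeo : Summable (fun k : ℕ => S⁻¹ * r ^ k) :=
    (summable_geometric_of_lt_one hr0 hr1).mul_left _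
  have hfs : Summable (fun k => ‖f k‖) :=
    Summable.of_nonneg_of_le (fun k => norm_nonneg _) hnorm_le hgeo
  have hhyp : ‖hyp2F1 (a+(m:ℝ)+1) ((n:ℝ)+1) (c+(m:ℝ)+(n:ℝ)+1) z‖ ≤ S⁻¹ * (1-r)⁻¹ := by
    rw [hyp2F1]
    calc ‖∑' k, f k‖ ≤ ∑' k, ‖f k‖ := norm_tsum_le_tsum_norm hfs
      _ ≤ ∑' k : ℕ, S⁻¹ * r ^ k := Summable.tsum_le_tsum hnorm_le hfs hgeo
      _ = S⁻¹ * (1-r)⁻¹ := by rw [tsum_mul_left, tsum_geometric_of_lt_one hr0 hr1]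
  have heq : ‖padeR m n a c z‖
      = S * (‖z‖ ^ (m+n+1) * ‖hyp2F1 (a+(m:ℝ)+1) ((n:ℝ)+1) (c+(m:ℝ)+(n:ℝ)+1) z‖) := by
    rw [padeR, norm_mul, norm_mul, norm_pow, Complex.norm_real, Real.norm_eq_abs,
      abs_of_pos hS, mul_assoc]
  rw [heq]
  calc S * (‖z‖ ^ (m+n+1) * ‖hyp2F1 (a+(m:ℝ)+1) ((n:ℝ)+1) (c+(m:ℝ)+(n:ℝ)+1) z‖)
      ≤ S * (r ^ (m+n+1) * (S⁻¹ * (1-r)⁻¹)) := by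
        apply mul_le_mul_of_nonneg_left _ hS.le
        exact mul_le_mul (pow_le_pow_left₀ (norm_nonneg z) hz _) hhyp (norm_nonneg _)
          (pow_nonneg hr0 _)
    _ = r ^ (m+n+1) / (1-r) := by
        have h1r : (1:ℝ) - r ≠ 0 := by linarith
        rw [div_eq_mul_inv]
        field_simp

/-- For `c > a > 0` and a ray sequence `m_k → ∞`, `n_k/m_k → ρ ∈ (0,1]` with
`m_k ≥ n_k - 1`, the remainder `R_{m_k n_k}(z)` tends to `0` uniformly on every
compact subset of the open unit disc. -/
theorem pade_remainder_tendsto_zero (a c : ℝ) (ha : 0 < a) (hca : a < c)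
    (ρ : ℝ) (hρ0 : 0 < ρ) (hρ1 : ρ ≤ 1) (m n : ℕ → ℕ)
    (hmpos : ∀ k, 0 < m k) (hnpos : ∀ k, 0 < n k) (hmn : ∀ k, n k - 1 ≤ m k)
    (hm : Filter.Tendsto (fun k => (m k : ℝ)) Filter.atTop Filter.atTop)
    (hray : Filter.Tendsto (fun k => (n k : ℝ) / (m k : ℝ)) Filter.atTop (nhds ρ)) :
    ∀ K : Set ℂ, IsCompact K → K ⊆ Metric.ball (0 : ℂ) 1 →
      TendstoUniformlyOn (fun k z => padeR (m k) (n k) a c z) (fun _ => 0)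
        Filter.atTop K := by
  intro K hK hKb
  obtain ⟨r, hr0, hr1, hrK⟩ : ∃ r : ℝ, 0 ≤ r ∧ r < 1 ∧ ∀ z ∈ K, ‖z‖ ≤ r := by
    rcases K.eq_empty_or_nonempty with hKe | hKne
    · exact ⟨0, le_refl 0, one_pos, by simp [hKe]⟩
    · obtain ⟨z₀, hz₀K, hz₀⟩ := hK.exists_isMaxOn hKne continuous_norm.continuousOn
      exact ⟨‖z₀‖, norm_nonneg _, mem_ball_zero_iff.mp (hKb hz₀K), fun z hz => hz₀ hz⟩
  have h1r : (0:ℝ) < 1 - r := by linarith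
  rw [Metric.tendstoUniformlyOn_iff]
  intro ε hε
  have hmN : Filter.Tendsto m Filter.atTop Filter.atTop := tendsto_natCast_atTop_iff.mp hm
  have h0 : Filter.Tendsto (fun k => r ^ (m k) / (1 - r)) Filter.atTop (nhds 0) := by
    have := ((tendsto_pow_atTop_nhds_zero_of_lt_one hr0 hr1).comp hmN).div_const (1 - r)
    simpa using this
  filter_upwards [h0.eventually (gt_mem_nhds hε)] with k hk z hzK
  rw [dist_zero_left]
  calc ‖padeR (m k) (n k) a c z‖ ≤ r ^ (m k + n k + 1) / (1 - r) :=
        padeR_norm_le a c ha hca _ _ hr0 hr1 (hrK z hzK)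
    _ ≤ r ^ (m k) / (1 - r) :=
        (div_le_div_iff_of_pos_right h1r).mpr (pow_le_pow_of_le_one hr0 hr1.le (by omega))
    _ < ε := hk
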